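/- Let X, Y be compact Hausdorff spaces and f : X → Y continuous. If f is nowhere tight, then f is not weakly c-tight; that is, there is a 2^ω-loose function for f, where 2^ω is the Cantor space. -/

import Mathlib

open Set Topology

universe u

section Defs

variable {X Y K Z : Type*}

/-- A subset `S` of a topological space is *scattered* iff every nonempty subset `T ⊆ S`
has a point which is isolated in the subspace topology of `T`. -/
def IsScatteredSet [TopologicalSpace X] (S : Set X) : Prop :=
  ∀ T ⊆ S, T.Nonempty → ∃ x ∈ T, ∃ U : Set X, IsOpen U ∧ U ∩ T = {x}

/-- A *loose family* for `f : X → Y` : a pairwise disjoint family `Ps` of closed subsets of `X`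
such that for some non-scattered `Q ⊆ Y`, `f '' P = Q` for all `P ∈ Ps`. -/
def LooseFamily [TopologicalSpace X] [TopologicalSpace Y] (f : X → Y)
    (Ps : Set (Set X)) : Prop :=
  Ps.Pairwise Disjoint ∧ (∀ P ∈ Ps, IsClosed P) ∧
    ∃ Q : Set Y, ¬ IsScatteredSet Q ∧ ∀ P ∈ Ps, f '' P = Q

/-- `f` is `κ`-*tight* iff there is no loose family for `f` of cardinality `κ`. -/
def IsTightCard [TopologicalSpace X] [TopologicalSpace Y] (κ : Cardinal) (f : X → Y) : Prop :=
  ¬ ∃ Ps : Set (Set X), LooseFamily f Ps ∧ Cardinal.mk Ps = κ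

/-- `f` is *tight* iff it is `2`-tight. -/
def IsTight [TopologicalSpace X] [TopologicalSpace Y] (f : X → Y) : Prop :=
  IsTightCard 2 f

/-- A `K`-*loose function* for `f : X → Y` : a continuous `φ : D → K` with `D` closed in `X`,
such that for some non-scattered `Q ⊆ Y`, `φ(f⁻¹{y} ∩ D) = K` for all `y ∈ Q`. -/
def LooseFunction [TopologicalSpace X] [TopologicalSpace Y] [TopologicalSpace K]
    (f : X → Y) (D : Set X) (φ : X → K) : Prop :=
  IsClosed D ∧ ContinuousOn φ D ∧
    ∃ Q : Set Y, ¬ IsScatteredSet Q ∧ ∀ y ∈ Q, φ '' (f ⁻¹' {y} ∩ D) = Set.univ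

/-- `f` is *weakly c-tight* iff there is no `K`-loose function for `f`
with `K` the Cantor space `2^ω`. -/
def WeaklyCTight [TopologicalSpace X] [TopologicalSpace Y] (f : X → Y) : Prop :=
  ¬ ∃ (D : Set X) (φ : X → (ℕ → Bool)), LooseFunction f D φ

/-- `f` is *finer* than `g` iff `f x₁ = f x₂` implies `g x₁ = g x₂`. -/
def Finer (f : X → Y) (g : X → Z) : Prop :=
  ∀ x₁ x₂ : X, f x₁ = f x₂ → g x₁ = g x₂

end Defs

/-- `X` is `κ`-*dissipated* iff every continuous map from `X` to a compact metrizable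
space is refined by a `κ`-tight continuous map from `X` to a compact metrizable space. -/
def IsDissipatedCard (κ : Cardinal.{u}) (X : Type u) [TopologicalSpace X] : Prop :=
  ∀ (Z : Type u) [TopologicalSpace Z] [CompactSpace Z] [TopologicalSpace.MetrizableSpace Z],
    ∀ g : X → Z, Continuous g →
      ∃ (Y : Type u) (tY : TopologicalSpace Y),
        @CompactSpace Y tY ∧ @TopologicalSpace.MetrizableSpace Y tY ∧
        ∃ f : X → Y, @Continuous X Y _ tY f ∧ @IsTightCard X Y _ tY κ f ∧ Finer f g

/-- `X` is *weakly c-dissipated* iff every continuous map from `X` to a compact metrizable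
space is refined by a weakly c-tight continuous map from `X` to a compact metrizable space. -/
def IsWeaklyCDissipated (X : Type u) [TopologicalSpace X] : Prop :=
  ∀ (Z : Type u) [TopologicalSpace Z] [CompactSpace Z] [TopologicalSpace.MetrizableSpace Z],
    ∀ g : X → Z, Continuous g →
      ∃ (Y : Type u) (tY : TopologicalSpace Y),
        @CompactSpace Y tY ∧ @TopologicalSpace.MetrizableSpace Y tY ∧
        ∃ f : X → Y, @Continuous X Y _ tY f ∧ @WeaklyCTight X Y _ tY f ∧ Finer f g

/-- A loose family for the restriction of `f` to a subset `P ⊆ X` : a pairwise disjoint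
family of closed subsets of `X` contained in `P` with a common non-scattered image. -/
def LooseFamilyOn {X Y : Type*} [TopologicalSpace X] [TopologicalSpace Y]
    (f : X → Y) (P : Set X) (Ps : Set (Set X)) : Prop :=
  Ps.Pairwise Disjoint ∧ (∀ A ∈ Ps, IsClosed A ∧ A ⊆ P) ∧
    ∃ Q : Set Y, ¬ IsScatteredSet Q ∧ ∀ A ∈ Ps, f '' A = Q

/-- `f` is *nowhere tight* iff `f(X)` is not scattered and there is no closed `P ⊆ X`
such that `f ↾ P : P → f(P)` is tight and `f(P)` is not scattered. -/
def NowhereTight {X Y : Type*} [TopologicalSpace X] [TopologicalSpace Y]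
    (f : X → Y) : Prop :=
  ¬ IsScatteredSet (Set.range f) ∧
    ¬ ∃ P : Set X, IsClosed P ∧
        (¬ ∃ Ps : Set (Set X), LooseFamilyOn f P Ps ∧ Cardinal.mk Ps = 2) ∧
        ¬ IsScatteredSet (f '' P)

/-!
Nowhere tightness splits every closed `P ⊆ X` with non-scattered image into two disjoint closed
sets with the same non-scattered image. Splitting all pieces of a level at once (and splitting the
common images in `Y` as well), one builds Cantor schemes of closed sets `P s` in `X` and of closed
non-scattered sets `K t` in `Y` such that every `K t` lies in the image of every `P s`. The branch
map of the scheme in `X` is continuous on its limit set `D`, and by compactness the fibre over any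
point of the limit set `Q` of the scheme in `Y` meets every branch. Finally `Q` is not scattered:
it maps continuously onto the Cantor space, and a minimal closed subset of `Q` still mapping onto
it can have no isolated point.
-/

open Filter Function

section Scattered

variable {Y : Type*} [TopologicalSpace Y]

theorem accPt_principal_iff_not_isolated {T : Set Y} {x : Y} (hx : x ∈ T) :
    AccPt x (𝓟 T) ↔ ¬ ∃ U, IsOpen U ∧ U ∩ T = {x} := by
  rw [accPt_iff_nhds]
  constructor
  · rintro hacc ⟨U, hU, hUT⟩
    obtain ⟨y, hy, hyx⟩ := hacc U (hU.mem_nhds (hUT.ge (mem_singleton x)).1)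
    rw [hUT] at hy
    exact hyx hy
  · intro hiso U hU
    by_contra! h
    refine hiso ⟨interior U, isOpen_interior, subset_antisymm ?_ ?_⟩
    · exact fun y hy => h y ⟨interior_subset hy.1, hy.2⟩
    · exact singleton_subset_iff.2 ⟨mem_interior_iff_mem_nhds.2 hU, hx⟩

theorem not_isScatteredSet_iff {S : Set Y} :
    ¬ IsScatteredSet S ↔ ∃ T ⊆ S, T.Nonempty ∧ Preperfect T := by
  simp only [IsScatteredSet, Preperfect, not_forall, exists_prop, not_exists]
  refine exists_congr fun T => and_congr_right fun _ => and_congr_right fun _ => ?_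
  refine forall_congr' fun x => ?_
  rw [not_and]
  exact imp_congr_right fun hx => (accPt_principal_iff_not_isolated hx).symm

theorem Preperfect.not_isScatteredSet {T : Set Y} (hT : Preperfect T) (hne : T.Nonempty) :
    ¬ IsScatteredSet T :=
  not_isScatteredSet_iff.2 ⟨T, subset_rfl, hne, hT⟩

theorem nonempty_of_not_isScatteredSet {S : Set Y} (h : ¬ IsScatteredSet S) : S.Nonempty := by
  obtain ⟨T, hTS, hT, -⟩ := not_isScatteredSet_iff.1 h
  exact hT.mono hTS

theorem IsClosed.exists_disjoint_not_isScatteredSet [T25Space Y] {K : Set Y} (hK : IsClosed K)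
    (hns : ¬ IsScatteredSet K) :
    ∃ K' : Bool → Set Y, (∀ δ, IsClosed (K' δ) ∧ K' δ ⊆ K ∧ ¬ IsScatteredSet (K' δ)) ∧
      Disjoint (K' true) (K' false) := by
  obtain ⟨T, hTK, hTne, hT⟩ := not_isScatteredSet_iff.1 hns
  obtain ⟨K₁, K₀, ⟨h₁, hne₁, hsub₁⟩, ⟨h₀, hne₀, hsub₀⟩, hdisj⟩ :=
    hT.perfect_closure.splitting hTne.closure
  have hcl : closure T ⊆ K := hK.closure_subset_iff.2 hTK
  refine ⟨fun δ => if δ then K₁ else K₀, fun δ => ?_, by simpa using hdisj⟩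
  cases δ
  · exact ⟨h₀.closed, hsub₀.trans hcl, h₀.acc.not_isScatteredSet hne₀⟩
  · exact ⟨h₁.closed, hsub₁.trans hcl, h₁.acc.not_isScatteredSet hne₁⟩

end Scattered

instance : PerfectSpace (ℕ → Bool) := by
  refine perfectSpace_iff_forall_not_isolated.2 fun b => ?_
  have h : Tendsto (fun n => Function.update b n (!b n)) atTop (𝓝[≠] b) := by
    refine tendsto_nhdsWithin_iff.2
      ⟨tendsto_pi_nhds.2 fun i => ?_, Eventually.of_forall fun n => ?_⟩
    · refine tendsto_const_nhds.congr' ((eventually_gt_atTop i).mono fun n hn => ?_)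
      exact (Function.update_of_ne hn.ne _ _).symm
    · intro h
      simpa using congrFun h n
  exact h.neBot

theorem IsChain.surjOn_sInter {Y Z : Type*} [TopologicalSpace Y] [CompactSpace Y]
    [TopologicalSpace Z] [T1Space Z] {Q : Set Y} {ψ : Y → Z} (hψ : ContinuousOn ψ Q)
    {c : Set (Set Y)} (hc : IsChain (· ⊆ ·) c) (hne : c.Nonempty)
    (hcl : ∀ E ∈ c, IsClosed E ∧ E ⊆ Q) (hsurj : ∀ E ∈ c, SurjOn ψ E univ) :
    SurjOn ψ (⋂₀ c) univ := by
  intro z _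
  obtain ⟨E₀, hE₀⟩ := hne
  have : Nonempty c := ⟨⟨E₀, hE₀⟩⟩
  have hfibre (E : c) : IsClosed ((E : Set Y) ∩ ψ ⁻¹' {z}) :=
    (hψ.mono (hcl E E.2).2).preimage_isClosed_of_isClosed (hcl E E.2).1 isClosed_singleton
  have hdir : Directed (· ⊇ ·) fun E : c => (E : Set Y) ∩ ψ ⁻¹' {z} := by
    rintro ⟨E, hE⟩ ⟨F, hF⟩
    rcases hc.total hE hF with h | h
    · exact ⟨⟨E, hE⟩, subset_rfl, inter_subset_inter_left _ h⟩
    · exact ⟨⟨F, hF⟩, inter_subset_inter_left _ h, subset_rfl⟩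
  obtain ⟨y, hy⟩ := IsCompact.nonempty_iInter_of_directed_nonempty_isCompact_isClosed _ hdir
    (fun E => hsurj E E.2 (mem_univ z)) (fun E => (hfibre E).isCompact) hfibre
  simp only [mem_iInter] at hy
  exact ⟨y, fun E hE => (hy ⟨E, hE⟩).1, (hy ⟨E₀, hE₀⟩).2⟩

theorem IsClosed.not_isScatteredSet_of_surjOn {Y Z : Type*} [TopologicalSpace Y] [CompactSpace Y]
    [TopologicalSpace Z] [T2Space Z] [PerfectSpace Z] [Nonempty Z] {Q : Set Y}
    (hQ : IsClosed Q) {ψ : Y → Z} (hψ : ContinuousOn ψ Q) (hsurj : SurjOn ψ Q univ) :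
    ¬ IsScatteredSet Q := by
  intro hsc
  set S : Set (Set Y) := {E | E ⊆ Q ∧ IsClosed E ∧ SurjOn ψ E univ}
  have hchain : ∀ c ⊆ S, IsChain (· ⊆ ·) c → c.Nonempty → ∃ lb ∈ S, ∀ E ∈ c, lb ⊆ E := by
    intro c hcS hc ⟨E₀, hE₀⟩
    refine ⟨⋂₀ c, ⟨(sInter_subset_of_mem hE₀).trans (hcS hE₀).1,
      isClosed_sInter fun E hE => (hcS hE).2.1, ?_⟩, fun E hE => sInter_subset_of_mem hE⟩
    exact hc.surjOn_sInter hψ ⟨E₀, hE₀⟩ (fun E hE => ⟨(hcS hE).2.1, (hcS hE).1⟩)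
      fun E hE => (hcS hE).2.2
  obtain ⟨m, -, hmin⟩ := zorn_superset_nonempty S hchain Q ⟨subset_rfl, hQ, hsurj⟩
  obtain ⟨hmQ, hmcl, hmsurj⟩ := hmin.prop
  obtain ⟨y, hym, -⟩ := hmsurj (mem_univ (Classical.arbitrary Z))
  obtain ⟨z, hzm, U, hU, hUm⟩ := hsc m hmQ ⟨y, hym⟩
  -- the image of `m \ U` misses at most `ψ z`, and it is closed, so it is everything
  have hsub : {ψ z}ᶜ ⊆ ψ '' (m \ U) := by
    intro c hc
    obtain ⟨e, hem, rfl⟩ := hmsurj (mem_univ c)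
    refine ⟨e, ⟨hem, fun heU => hc ?_⟩, rfl⟩
    have : e ∈ U ∩ m := ⟨heU, hem⟩
    rw [hUm] at this
    exact congrArg ψ this
  have hcl : IsClosed (ψ '' (m \ U)) :=
    ((hmcl.sdiff hU).isCompact.image_of_continuousOn (hψ.mono (sdiff_subset.trans hmQ))).isClosed
  have hmem : m \ U ∈ S := ⟨sdiff_subset.trans hmQ, hmcl.sdiff hU, fun c _ =>
    hcl.closure_eq ▸ (dense_compl_singleton (ψ z)).mono hsub c⟩
  exact (hmin.2 hmem sdiff_subset hzm).2 (hUm.ge (mem_singleton z)).1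

section BranchMap

variable {Z : Type*}

noncomputable def branchMap (F : (n : ℕ) → (Fin n → Bool) → Set Z) (z : Z) (i : ℕ) : Bool :=
  (⋃ (s : Fin (i + 1) → Bool) (_ : s (Fin.last i) = true), F (i + 1) s).boolIndicator z

variable {F : (n : ℕ) → (Fin n → Bool) → Set Z}

theorem branchMap_apply_of_mem (hF : ∀ n, Pairwise (Disjoint on F n)) {z : Z} {i : ℕ}
    {s : Fin (i + 1) → Bool} (hz : z ∈ F (i + 1) s) : branchMap F z i = s (Fin.last i) := by
  unfold branchMap
  cases hs : s (Fin.last i)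
  · refine (Set.notMem_iff_boolIndicator _ _).1 ?_
    simp only [mem_iUnion, not_exists]
    intro s' hs' hz'
    exact (hF _ fun h => by simp [h, hs'] at hs).notMem_of_mem_left hz hz'
  · exact (Set.mem_iff_boolIndicator _ _).1 (mem_iUnion₂.2 ⟨s, hs, hz⟩)

theorem branchMap_eq (hF : ∀ n, Pairwise (Disjoint on F n)) {z : Z} {b : ℕ → Bool}
    (hz : ∀ n, z ∈ F n fun i => b i) : branchMap F z = b :=
  funext fun i => branchMap_apply_of_mem hF (hz (i + 1))

theorem continuousOn_branchMap [TopologicalSpace Z] (hcl : ∀ n s, IsClosed (F n s))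
    (hF : ∀ n, Pairwise (Disjoint on F n)) :
    ContinuousOn (branchMap F) (⋂ n, ⋃ s, F n s) := by
  refine continuousOn_pi.2 fun i => ContinuousOn.mono ?_ (iInter_subset _ (i + 1))
  refine (locallyFinite_of_finite _).continuousOn_iUnion (hcl _) fun s => ?_
  exact continuousOn_const.congr fun z hz => branchMap_apply_of_mem hF hz

theorem exists_forall_mem_branch [TopologicalSpace Z] [CompactSpace Z]
    (hcl : ∀ n s, IsClosed (F n s)) (hne : ∀ n s, (F n s).Nonempty)
    (hanti : ∀ n s, F (n + 1) s ⊆ F n (Fin.init s)) (b : ℕ → Bool) :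
    ∃ z, ∀ n, z ∈ F n fun i => b i := by
  obtain ⟨z, hz⟩ := IsCompact.nonempty_iInter_of_sequence_nonempty_isCompact_isClosed
    (fun n => F n fun i => b i) (fun n => hanti n _) (fun n => hne n _) (hcl 0 _).isCompact
    (fun n => hcl n _)
  exact ⟨z, mem_iInter.1 hz⟩

end BranchMap

section NowhereTight

variable {X Y : Type*} [TopologicalSpace X] [TopologicalSpace Y] {f : X → Y}

theorem NowhereTight.exists_split (hnt : NowhereTight f) {P : Set X} (hP : IsClosed P)
    (hPns : ¬ IsScatteredSet (f '' P)) :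
    ∃ A B : Set X, IsClosed A ∧ IsClosed B ∧ A ⊆ P ∧ B ⊆ P ∧ Disjoint A B ∧
      f '' A = f '' B ∧ ¬ IsScatteredSet (f '' A) := by
  obtain ⟨Ps, ⟨hdisj, hsub, Q, hQ, himg⟩, hcard⟩ :
      ∃ Ps, LooseFamilyOn f P Ps ∧ Cardinal.mk Ps = 2 := by
    by_contra h
    exact hnt.2 ⟨P, hP, h, hPns⟩
  obtain ⟨⟨A, hA⟩, ⟨B, hB⟩, hAB⟩ := Cardinal.two_le_iff.1 hcard.ge
  exact ⟨A, B, (hsub A hA).1, (hsub B hB).1, (hsub A hA).2, (hsub B hB).2,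
    hdisj hA hB fun h => hAB (Subtype.ext h), (himg A hA).trans (himg B hB).symm, himg A hA ▸ hQ⟩

variable [CompactSpace X] [T2Space Y]

theorem NowhereTight.exists_common_split (hf : Continuous f) (hnt : NowhereTight f) {ι : Type*}
    [Fintype ι] {P : ι → Set X} (hP : ∀ i, IsClosed (P i)) {K : Set Y} (hK : IsClosed K)
    (hKns : ¬ IsScatteredSet K) (hKP : ∀ i, K ⊆ f '' P i) :
    ∃ K' ⊆ K, IsClosed K' ∧ ¬ IsScatteredSet K' ∧ ∃ A : ι → Bool → Set X,
      (∀ i ε, IsClosed (A i ε) ∧ A i ε ⊆ P i ∧ K' ⊆ f '' A i ε) ∧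
        ∀ i, Disjoint (A i true) (A i false) := by
  classical
  suffices ∀ S : Finset ι, ∃ K' ⊆ K, IsClosed K' ∧ ¬ IsScatteredSet K' ∧ ∃ A : ι → Bool → Set X,
      ∀ i ∈ S, (∀ ε, IsClosed (A i ε) ∧ A i ε ⊆ P i ∧ K' ⊆ f '' A i ε) ∧
        Disjoint (A i true) (A i false) by
    obtain ⟨K', hK'K, hK', hK'ns, A, hA⟩ := this Finset.univ
    exact ⟨K', hK'K, hK', hK'ns, A, fun i => (hA i (Finset.mem_univ i)).1,
      fun i => (hA i (Finset.mem_univ i)).2⟩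
  intro S
  induction S using Finset.induction_on with
  | empty => exact ⟨K, subset_rfl, hK, hKns, fun _ _ => ∅, by simp⟩
  | @insert j S hj ih =>
    obtain ⟨K', hK'K, hK', hK'ns, A, hA⟩ := ih
    have himg : f '' (P j ∩ f ⁻¹' K') = K' := by
      rw [image_inter_preimage]
      exact inter_eq_right.2 (hK'K.trans (hKP j))
    obtain ⟨A₀, A₁, hA₀, hA₁, hA₀P, hA₁P, hdisj, heq, hns⟩ :=
      hnt.exists_split ((hP j).inter (hK'.preimage hf)) (himg.symm ▸ hK'ns)
    have hA₀K' : f '' A₀ ⊆ K' := himg ▸ image_mono hA₀P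
    refine ⟨f '' A₀, hA₀K'.trans hK'K, (hA₀.isCompact.image hf).isClosed, hns,
      fun i ε => if i = j then (if ε then A₀ else A₁) else A i ε ∩ f ⁻¹' (f '' A₀), ?_⟩
    intro i hi
    by_cases hij : i = j
    · subst hij
      refine ⟨fun ε => ?_, by simpa using hdisj⟩
      cases ε
      · simpa [hA₁, hA₁P.trans inter_subset_left] using heq.le
      · simp [hA₀, hA₀P.trans inter_subset_left]
    · obtain ⟨hAi, hdisj⟩ := hA i ((Finset.mem_insert.1 hi).resolve_left hij)
      simp only [if_neg hij]
      refine ⟨fun ε => ⟨(hAi ε).1.inter ((hA₀.isCompact.image hf).isClosed.preimage hf),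
        inter_subset_left.trans (hAi ε).2.1, ?_⟩, hdisj.mono inter_subset_left inter_subset_left⟩
      rw [image_inter_preimage]
      exact subset_inter (hA₀K'.trans (hAi ε).2.2) subset_rfl

end NowhereTight

theorem pairwise_disjoint_init_last {α : Type*} {n : ℕ} {G : (Fin n → Bool) → Set α}
    {F : (Fin n → Bool) → Bool → Set α} (hG : Pairwise (Disjoint on G))
    (hFG : ∀ s ε, F s ε ⊆ G s) (hF : ∀ s, Disjoint (F s true) (F s false)) :
    Pairwise (Disjoint on fun s : Fin (n + 1) → Bool => F (Fin.init s) (s (Fin.last n))) := by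
  intro s s' hss'
  by_cases hinit : Fin.init s = Fin.init s'
  · have hlast : s (Fin.last n) ≠ s' (Fin.last n) := fun h => hss' (by
      rw [← Fin.snoc_init_self s, ← Fin.snoc_init_self s', hinit, h])
    simp only [onFun, hinit]
    revert hlast
    cases s (Fin.last n) <;> cases s' (Fin.last n) <;> simp [hF, (hF _).symm]
  · exact (hG hinit).mono (hFG _ _) (hFG _ _)

section Scheme

variable {X Y : Type*} [TopologicalSpace X] [TopologicalSpace Y]

structure SchemeLevel (f : X → Y) (n : ℕ) where
  P : (Fin n → Bool) → Set X
  K : (Fin n → Bool) → Set Y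
  isClosed_P : ∀ s, IsClosed (P s)
  isClosed_K : ∀ t, IsClosed (K t)
  not_isScatteredSet_K : ∀ t, ¬ IsScatteredSet (K t)
  pairwise_disjoint_P : Pairwise (Disjoint on P)
  pairwise_disjoint_K : Pairwise (Disjoint on K)
  subset_image : ∀ s t, K t ⊆ f '' P s

variable {f : X → Y} {n : ℕ}

def SchemeLevel.Refines (L' : SchemeLevel f (n + 1)) (L : SchemeLevel f n) : Prop :=
  (∀ s, L'.P s ⊆ L.P (Fin.init s)) ∧ ∀ t, L'.K t ⊆ L.K (Fin.init t)

variable [CompactSpace X] [CompactSpace Y] [T2Space Y]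

theorem SchemeLevel.exists_refines (hf : Continuous f) (hnt : NowhereTight f)
    (L : SchemeLevel f n) : ∃ L' : SchemeLevel f (n + 1), L'.Refines L := by
  have hsplit (t) := hnt.exists_common_split hf
    (fun s => (L.isClosed_P s).inter ((L.isClosed_K t).preimage hf)) (L.isClosed_K t)
    (L.not_isScatteredSet_K t) fun s => by
      rw [image_inter_preimage]
      exact subset_inter (L.subset_image s t) subset_rfl
  choose K₁ hK₁K hK₁ hK₁ns A hA hAdisj using hsplit
  choose K₂ hK₂ hK₂disj using fun t => (hK₁ t).exists_disjoint_not_isScatteredSet (hK₁ns t)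
  set P₁ : (Fin n → Bool) → Bool → Set X := fun s ε => ⋃ t, A t s ε
  have hP₁ : ∀ s ε, P₁ s ε ⊆ L.P s := fun s ε =>
    iUnion_subset fun t => (hA t s ε).2.1.trans inter_subset_left
  have hP₁disj : ∀ s, Disjoint (P₁ s true) (P₁ s false) := by
    refine fun s => disjoint_iUnion_left.2 fun t => disjoint_iUnion_right.2 fun t' => ?_
    by_cases htt' : t = t'
    · exact htt' ▸ hAdisj t s
    · exact ((L.pairwise_disjoint_K htt').preimage f).mono
        ((hA t s true).2.1.trans inter_subset_right) ((hA t' s false).2.1.trans inter_subset_right)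
  refine ⟨⟨fun s => P₁ (Fin.init s) (s (Fin.last n)), fun t => K₂ (Fin.init t) (t (Fin.last n)),
    fun s => isClosed_iUnion_of_finite fun t => (hA t _ _).1, fun t => (hK₂ _ _).1,
    fun t => (hK₂ _ _).2.2, pairwise_disjoint_init_last L.pairwise_disjoint_P hP₁ hP₁disj,
    pairwise_disjoint_init_last L.pairwise_disjoint_K
      (fun t δ => (hK₂ t δ).2.1.trans (hK₁K t)) hK₂disj,
    fun s t => ?_⟩, fun s => hP₁ _ _, fun t => (hK₂ _ _).2.1.trans (hK₁K _)⟩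
  exact (hK₂ _ _).2.1.trans
    ((hA _ _ _).2.2.trans (image_mono (subset_iUnion_of_subset _ subset_rfl)))

theorem SchemeLevel.exists_seq_refines (hf : Continuous f) (hnt : NowhereTight f) :
    ∃ L : (n : ℕ) → SchemeLevel f n, ∀ n, (L (n + 1)).Refines (L n) := by
  choose next hnext using fun n (L : SchemeLevel f n) => L.exists_refines hf hnt
  let L₀ : SchemeLevel f 0 :=
    { P := fun _ => univ
      K := fun _ => range f
      isClosed_P := fun _ => isClosed_univ
      isClosed_K := fun _ => (isCompact_range hf).isClosed
      not_isScatteredSet_K := fun _ => hnt.1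
      pairwise_disjoint_P := fun s s' h => (h (Subsingleton.elim s s')).elim
      pairwise_disjoint_K := fun t t' h => (h (Subsingleton.elim t t')).elim
      subset_image := fun _ _ => by rw [image_univ] }
  exact ⟨fun n => Nat.rec L₀ next n, fun n => hnext n _⟩

theorem looseFunction_branchMap (hf : Continuous f) (L : (n : ℕ) → SchemeLevel f n)
    (hL : ∀ n, (L (n + 1)).Refines (L n)) :
    LooseFunction f (⋂ n, ⋃ s, (L n).P s) (branchMap fun n => (L n).P) := by
  have hQ : IsClosed (⋂ n, ⋃ t, (L n).K t) :=
    isClosed_iInter fun n => isClosed_iUnion_of_finite (L n).isClosed_K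
  refine ⟨isClosed_iInter fun n => isClosed_iUnion_of_finite (L n).isClosed_P,
    continuousOn_branchMap (fun n => (L n).isClosed_P) (fun n => (L n).pairwise_disjoint_P),
    ⋂ n, ⋃ t, (L n).K t, ?_, fun y hy => eq_univ_of_forall fun b => ?_⟩
  · refine hQ.not_isScatteredSet_of_surjOn
      (continuousOn_branchMap (fun n => (L n).isClosed_K) (fun n => (L n).pairwise_disjoint_K))
      fun b _ => ?_
    obtain ⟨y, hy⟩ := exists_forall_mem_branch (fun n => (L n).isClosed_K)
      (fun n t => nonempty_of_not_isScatteredSet ((L n).not_isScatteredSet_K t))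
      (fun n => (hL n).2) b
    exact ⟨y, mem_iInter.2 fun n => mem_iUnion_of_mem _ (hy n),
      branchMap_eq (fun n => (L n).pairwise_disjoint_K) hy⟩
  · have hne (n s) : (f ⁻¹' {y} ∩ (L n).P s).Nonempty := by
      obtain ⟨t, hyt⟩ := mem_iUnion.1 (mem_iInter.1 hy n)
      obtain ⟨x, hx, rfl⟩ := (L n).subset_image s t hyt
      exact ⟨x, rfl, hx⟩
    obtain ⟨x, hx⟩ := exists_forall_mem_branch
      (fun n s => (isClosed_singleton.preimage hf).inter ((L n).isClosed_P s)) hne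
      (fun n s => inter_subset_inter_right _ ((hL n).1 s)) b
    exact ⟨x, ⟨(hx 0).1, mem_iInter.2 fun n => mem_iUnion_of_mem _ (hx n).2⟩,
      branchMap_eq (fun n => (L n).pairwise_disjoint_P) fun n => (hx n).2⟩

end Scheme

theorem stmt7_general {X Y : Type*}
    [TopologicalSpace X] [CompactSpace X]
    [TopologicalSpace Y] [CompactSpace Y] [T2Space Y]
    (f : X → Y) (hf : Continuous f) (hnt : NowhereTight f) :
    ∃ (D : Set X) (φ : X → (ℕ → Bool)), LooseFunction f D φ :=
  let ⟨L, hL⟩ := SchemeLevel.exists_seq_refines hf hnt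
  ⟨_, _, looseFunction_branchMap hf L hL⟩

/-- If `f : X → Y` is nowhere tight, then `f` is not weakly c-tight: there is a
`2^ω`-loose function for `f`. -/
theorem stmt7 {X Y : Type*}
    [TopologicalSpace X] [CompactSpace X] [T2Space X]
    [TopologicalSpace Y] [CompactSpace Y] [T2Space Y]
    (f : X → Y) (hf : Continuous f) (hnt : NowhereTight f) :
    ∃ (D : Set X) (φ : X → (ℕ → Bool)), LooseFunction f D φ :=
  stmt7_general f hf hnt
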